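/- Let β be the Bell-diagonal density matrix on ℂ²⊗ℂ² given by β = (1/3)(Ψ⁺(Ψ⁺)† + Ψ⁻(Ψ⁻)† + Φ⁺(Φ⁺)†), where Ψ^± = (e₀⊗e₀ ± e₁⊗e₁)/√2 and Φ⁺ = (e₀⊗e₁ + e₁⊗e₀)/√2 in the standard basis (e₀,e₁) of ℂ², and let β_swap denote the matrix with entries (β_swap)_{(j,i),(j',i')} = β_{(i,j),(i',j')}. Then N_H^b(β_swap⊗β) ≥ 5/12. -/

import Mathlib

open scoped Matrix Kronecker BigOperators ComplexOrder
open Matrix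

/-- The positive-semidefinite square root of a PSD matrix (0 if not PSD). -/
noncomputable def psdSqrt {N : Type*} [Fintype N] [DecidableEq N] (A : Matrix N N ℂ) :
    Matrix N N ℂ :=
  open scoped Classical in
  if h : A.PosSemidef then
    (h.1.eigenvectorUnitary : Matrix N N ℂ) *
      Matrix.diagonal ((↑) ∘ (Real.sqrt ·) ∘ h.1.eigenvalues) *
      (star h.1.eigenvectorUnitary : Matrix N N ℂ) else 0

/-- Squared Frobenius (Hilbert–Schmidt) norm: `‖X‖² = tr (Xᴴ X)`. -/
noncomputable def hsNormSq {N : Type*} [Fintype N] (X : Matrix N N ℂ) : ℝ :=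
  (Matrix.trace (Xᴴ * X)).re

/-- A density matrix: positive semidefinite with unit trace. -/
def IsDensity {N : Type*} [Fintype N] [DecidableEq N] (ρ : Matrix N N ℂ) : Prop :=
  ρ.PosSemidef ∧ ρ.trace = 1

/-- Standard inner product on `ℂ^N`. -/
noncomputable def cInner {N : Type*} [Fintype N] (x y : N → ℂ) : ℂ :=
  ∑ i, star (x i) * y i

/-- Outer product `ψ ψ†`. -/
noncomputable def outer {N : Type*} (ψ : N → ℂ) : Matrix N N ℂ :=
  Matrix.vecMulVec ψ (star ψ)

/-- The family of unit vectors of a rank-one von Neumann measurement: an orthonormal basis,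
indexed by the dimension. -/
def IsVNM {N : Type*} [Fintype N] [DecidableEq N] (u : N → N → ℂ) : Prop :=
  ∀ a b, cInner (u a) (u b) = if a = b then (1 : ℂ) else 0

/-- The rank-one projection `Π_h = u_h u_h†` of a measurement. -/
noncomputable def projOf {N : Type*} (u : N → N → ℂ) (h : N) : Matrix N N ℂ :=
  outer (u h)

/-- The measurement `{u_h u_h†}` fixes `σ`: `Σ_h Π_h σ Π_h = σ`. -/
def FixesVNM {N : Type*} [Fintype N] (u : N → N → ℂ) (σ : Matrix N N ℂ) : Prop :=
  ∑ h, projOf u h * σ * projOf u h = σ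

/-- Reduced state of the second factor: `(ρ_B)_{j j'} = Σ_i ρ_{(i,j),(i,j')}`. -/
noncomputable def redB {m n : ℕ} (ρ : Matrix (Fin m × Fin n) (Fin m × Fin n) ℂ) :
    Matrix (Fin n) (Fin n) ℂ :=
  Matrix.of fun j j' => ∑ i, ρ (i, j) (i, j')

/-- Reduced state of the first factor: `(ρ_C)_{k k'} = Σ_l ρ_{(k,l),(k',l)}`. -/
noncomputable def redC {u v : ℕ} (ρ : Matrix (Fin u × Fin v) (Fin u × Fin v) ℂ) :
    Matrix (Fin u) (Fin u) ℂ :=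
  Matrix.of fun k k' => ∑ l, ρ (k, l) (k', l)

/-- `I_m ⊗ P ⊗ I_v` acting on the middle two factors. -/
noncomputable def ampMid (m v : ℕ) {n u : ℕ} (P : Matrix (Fin n × Fin u) (Fin n × Fin u) ℂ) :
    Matrix ((Fin m × Fin n) × Fin u × Fin v) ((Fin m × Fin n) × Fin u × Fin v) ℂ :=
  Matrix.of fun p q =>
    (if p.1.1 = q.1.1 then (1 : ℂ) else 0) * P (p.1.2, p.2.1) (q.1.2, q.2.1) *
      (if p.2.2 = q.2.2 then (1 : ℂ) else 0)

/-- The map `Π^{BC}(X) = Σ_h (I_m ⊗ Π_h ⊗ I_v) X (I_m ⊗ Π_h ⊗ I_v)`. -/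
noncomputable def pinchBC {m n u v : ℕ} (w : (Fin n × Fin u) → (Fin n × Fin u) → ℂ)
    (X : Matrix ((Fin m × Fin n) × Fin u × Fin v) ((Fin m × Fin n) × Fin u × Fin v) ℂ) :
    Matrix ((Fin m × Fin n) × Fin u × Fin v) ((Fin m × Fin n) × Fin u × Fin v) ℂ :=
  ∑ h, ampMid m v (projOf w h) * X * ampMid m v (projOf w h)

/-- The measurement-induced nonbilocality `N_H^b(ρ_AB ⊗ ρ_CD)`. -/
noncomputable def NHb {m n u v : ℕ}
    (ρAB : Matrix (Fin m × Fin n) (Fin m × Fin n) ℂ)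
    (ρCD : Matrix (Fin u × Fin v) (Fin u × Fin v) ℂ) : ℝ :=
  sSup { r : ℝ | ∃ w : (Fin n × Fin u) → (Fin n × Fin u) → ℂ,
    IsVNM w ∧ FixesVNM w (redB ρAB ⊗ₖ redC ρCD) ∧
    r = hsNormSq (psdSqrt (ρAB ⊗ₖ ρCD) - pinchBC w (psdSqrt (ρAB ⊗ₖ ρCD))) }

/-- The Bell state `Ψ⁺ = (|00⟩ + |11⟩)/√2`. -/
noncomputable def PsiP : Fin 2 × Fin 2 → ℂ := fun p =>
  if p.1 = p.2 then (((1 : ℝ) / Real.sqrt 2 : ℝ) : ℂ) else 0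

/-- The Bell state `Ψ⁻ = (|00⟩ − |11⟩)/√2`. -/
noncomputable def PsiM : Fin 2 × Fin 2 → ℂ := fun p =>
  if p = (0, 0) then (((1 : ℝ) / Real.sqrt 2 : ℝ) : ℂ)
  else if p = (1, 1) then -(((1 : ℝ) / Real.sqrt 2 : ℝ) : ℂ) else 0

/-- The Bell state `Φ⁺ = (|01⟩ + |10⟩)/√2`. -/
noncomputable def PhiP : Fin 2 × Fin 2 → ℂ := fun p =>
  if p.1 = p.2 then 0 else (((1 : ℝ) / Real.sqrt 2 : ℝ) : ℂ)

/-- The Bell-diagonal state `β = (1/3)(Ψ⁺Ψ⁺† + Ψ⁻Ψ⁻† + Φ⁺Φ⁺†)`. -/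
noncomputable def bellDiag : Matrix (Fin 2 × Fin 2) (Fin 2 × Fin 2) ℂ :=
  ((1 / 3 : ℝ) : ℂ) • (outer PsiP + outer PsiM + outer PhiP)

/-- The swap of `bellDiag`. -/
noncomputable def bellSwap : Matrix (Fin 2 × Fin 2) (Fin 2 × Fin 2) ℂ :=
  Matrix.of fun p q => bellDiag (p.2, p.1) (q.2, q.1)

/-! `β` is a third of the projector onto the triplet subspace of `ℂ² ⊗ ℂ²`; hence `β_swap = β`,
`β² = β / 3` and `√(β_swap ⊗ β) = 3 β ⊗ β`. Measuring the middle pair `BC` in the Bell basis fixes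
`ρ_B ⊗ ρ_C = I / 4` (every von Neumann measurement fixes multiples of the identity), so the value of
this measurement, which is `5 / 12`, bounds `N_H^b` from below. The supremum is finite because a
pinching by orthogonal projections is an orthogonal projection for the Hilbert–Schmidt inner
product, hence `‖√ρ − Π(√ρ)‖² ≤ ‖√ρ‖²`.

Up to the factor `1 / √2` of the Bell vectors every matrix involved is rational, so the numerical
identities are checked by evaluating integer matrices in the kernel. -/

section Pinching

variable {ι N : Type*} [Fintype ι] [Fintype N]

lemma hsNormSq_nonneg (X : Matrix N N ℂ) : 0 ≤ hsNormSq X := by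
  exact Complex.nonneg_iff.mp (posSemidef_conjTranspose_mul_self X).trace_nonneg |>.1

noncomputable def pinching (P : ι → Matrix N N ℂ) (X : Matrix N N ℂ) : Matrix N N ℂ :=
  ∑ a, P a * X * P a

variable {P : ι → Matrix N N ℂ}

lemma pinching_pinching [DecidableEq ι] (hP : ∀ a b, P a * P b = if a = b then P a else 0)
    (X : Matrix N N ℂ) : pinching P (pinching P X) = pinching P X := by
  refine Finset.sum_congr rfl fun a _ => ?_
  simp only [pinching, Finset.mul_sum, Finset.sum_mul, ← Matrix.mul_assoc]
  rw [Finset.sum_eq_single a]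
  · rw [hP a a, if_pos rfl, Matrix.mul_assoc _ _ (P a), hP a a, if_pos rfl]
  · intro b _ hba
    rw [hP a b, if_neg (Ne.symm hba)]
    simp
  · simp

lemma trace_conjTranspose_pinching_mul (hPH : ∀ a, (P a)ᴴ = P a) (X Y : Matrix N N ℂ) :
    trace ((pinching P X)ᴴ * Y) = trace (Xᴴ * pinching P Y) := by
  simp only [pinching, conjTranspose_sum, conjTranspose_mul, hPH, Finset.sum_mul,
    Finset.mul_sum, trace_sum]
  refine Finset.sum_congr rfl fun a _ => ?_
  rw [Matrix.mul_assoc, Matrix.mul_assoc, trace_mul_comm]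
  simp only [Matrix.mul_assoc]

lemma hsNormSq_sub_pinching [DecidableEq ι] (hP : ∀ a b, P a * P b = if a = b then P a else 0)
    (hPH : ∀ a, (P a)ᴴ = P a) (X : Matrix N N ℂ) :
    hsNormSq (X - pinching P X) = hsNormSq X - hsNormSq (pinching P X) := by
  set Y := pinching P X
  have hYY : trace (Yᴴ * Y) = trace (Xᴴ * Y) := by
    rw [trace_conjTranspose_pinching_mul hPH, pinching_pinching hP]
  have hYX : trace (Yᴴ * X) = star (trace (Xᴴ * Y)) := by
    rw [← trace_conjTranspose, conjTranspose_mul, conjTranspose_conjTranspose]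
  have hre : (trace (Yᴴ * X)).re = (trace (Xᴴ * Y)).re := by
    rw [hYX, Complex.star_def, Complex.conj_re]
  simp only [hsNormSq, conjTranspose_sub, Matrix.sub_mul, Matrix.mul_sub, trace_sub,
    Complex.sub_re, hYY]
  linarith

lemma hsNormSq_sub_pinching_le [DecidableEq ι] (hP : ∀ a b, P a * P b = if a = b then P a else 0)
    (hPH : ∀ a, (P a)ᴴ = P a) (X : Matrix N N ℂ) :
    hsNormSq (X - pinching P X) ≤ hsNormSq X := by
  rw [hsNormSq_sub_pinching hP hPH]
  linarith [hsNormSq_nonneg (pinching P X)]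

end Pinching

section Measurement

lemma conjTranspose_projOf {N : Type*} (w : N → N → ℂ) (a : N) :
    (projOf w a)ᴴ = projOf w a := by
  rw [projOf, outer, conjTranspose_vecMulVec, star_star]

variable {N : Type*} [Fintype N] [DecidableEq N] {w : N → N → ℂ}

lemma projOf_mul_projOf (hw : IsVNM w) (a b : N) :
    projOf w a * projOf w b = if a = b then projOf w a else 0 := by
  have hdot : star (w a) ⬝ᵥ w b = cInner (w a) (w b) := rfl
  rw [projOf, projOf, outer, outer, vecMulVec_mul_vecMulVec, hdot, hw a b]
  split_ifs with hab
  · rw [one_smul, hab]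
  · rw [zero_smul, vecMulVec_zero]

lemma sum_projOf_eq_one (hw : IsVNM w) : ∑ a, projOf w a = 1 := by
  set U : Matrix N N ℂ := Matrix.of fun i a => w a i
  have hU : Uᴴ * U = 1 := by
    ext a b
    simpa [U, Matrix.mul_apply, one_apply, cInner] using hw a b
  have := mul_eq_one_comm.mp hU
  rw [← this]
  ext i j
  simp [U, Matrix.mul_apply, projOf, outer, Matrix.sum_apply, vecMulVec_apply]

lemma fixesVNM_smul_one (hw : IsVNM w) (c : ℂ) : FixesVNM w (c • 1) := by
  have hsq : ∀ a, projOf w a * projOf w a = projOf w a := fun a => by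
    rw [projOf_mul_projOf hw, if_pos rfl]
  simp only [FixesVNM, Matrix.mul_smul, Matrix.mul_one, Matrix.smul_mul, hsq, ← Finset.smul_sum,
    sum_projOf_eq_one hw]

end Measurement

section Bilocal

variable {m n u v : ℕ}

lemma ampMid_mul (P Q : Matrix (Fin n × Fin u) (Fin n × Fin u) ℂ) :
    ampMid m v P * ampMid m v Q = ampMid m v (P * Q) := by
  ext ⟨⟨a, b⟩, c, d⟩ ⟨⟨a', b'⟩, c', d'⟩
  simp only [ampMid, Matrix.mul_apply, Matrix.of_apply, Fintype.sum_prod_type, mul_ite, ite_mul,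
    one_mul, mul_one, zero_mul, mul_zero, Finset.sum_ite_irrel, Finset.sum_ite_eq',
    Finset.mem_univ, if_true, Finset.sum_const_zero]

lemma conjTranspose_ampMid (P : Matrix (Fin n × Fin u) (Fin n × Fin u) ℂ) :
    (ampMid m v P)ᴴ = ampMid m v Pᴴ := by
  ext ⟨⟨a, b⟩, c, d⟩ ⟨⟨a', b'⟩, c', d'⟩
  simp only [ampMid, conjTranspose_apply, Matrix.of_apply, star_mul', apply_ite star,
    star_one, star_zero, eq_comm]

lemma ampMid_smul (c : ℂ) (P : Matrix (Fin n × Fin u) (Fin n × Fin u) ℂ) :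
    ampMid m v (c • P) = c • ampMid m v P := by
  ext p q
  simp only [ampMid, of_apply, Matrix.smul_apply, smul_eq_mul]
  ring

lemma ampMid_zero : ampMid m v (0 : Matrix (Fin n × Fin u) (Fin n × Fin u) ℂ) = 0 := by
  ext p q
  simp [ampMid]

lemma hsNormSq_sub_pinchBC_le {w : Fin n × Fin u → Fin n × Fin u → ℂ} (hw : IsVNM w)
    (X : Matrix ((Fin m × Fin n) × Fin u × Fin v) ((Fin m × Fin n) × Fin u × Fin v) ℂ) :
    hsNormSq (X - pinchBC w X) ≤ hsNormSq X := by
  refine hsNormSq_sub_pinching_le (P := fun h => ampMid m v (projOf w h)) (fun a b => ?_)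
    (fun a => ?_) X
  · rw [ampMid_mul, projOf_mul_projOf hw]
    split_ifs
    exacts [rfl, ampMid_zero]
  · rw [conjTranspose_ampMid, conjTranspose_projOf]

lemma le_NHb {ρAB : Matrix (Fin m × Fin n) (Fin m × Fin n) ℂ}
    {ρCD : Matrix (Fin u × Fin v) (Fin u × Fin v) ℂ} {w : Fin n × Fin u → Fin n × Fin u → ℂ}
    (hw : IsVNM w) (hfix : FixesVNM w (redB ρAB ⊗ₖ redC ρCD)) :
    hsNormSq (psdSqrt (ρAB ⊗ₖ ρCD) - pinchBC w (psdSqrt (ρAB ⊗ₖ ρCD))) ≤ NHb ρAB ρCD := by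
  refine le_csSup ⟨hsNormSq (psdSqrt (ρAB ⊗ₖ ρCD)), ?_⟩ ⟨w, hw, hfix, rfl⟩
  rintro r ⟨w', hw', -, rfl⟩
  exact hsNormSq_sub_pinchBC_le hw' _

end Bilocal

open scoped MatrixOrder in
lemma psdSqrt_eq_of_mul_self {N : Type*} [Fintype N] [DecidableEq N] {A T : Matrix N N ℂ}
    (hT : T.PosSemidef) (hTA : T * T = A) : psdSqrt A = T := by
  have hA : A.PosSemidef := by
    rw [← hTA]
    nth_rewrite 1 [← hT.1.eq]
    exact posSemidef_conjTranspose_mul_self T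
  rw [psdSqrt, dif_pos hA]
  have e := hA.1.cfc_eq Real.sqrt
  rw [Matrix.IsHermitian.cfc, Unitary.conjStarAlgAut_apply] at e
  refine e.symm.trans ?_
  rw [← cfcₙ_eq_cfc (hf0 := Real.sqrt_zero), ← CFC.sqrt_eq_real_sqrt _ hA.nonneg]
  exact CFC.sqrt_unique hTA hT.nonneg

lemma posSemidef_of_mul_self_eq_smul {N : Type*} [Fintype N] {T : Matrix N N ℂ}
    (hT : T.IsHermitian) {c : ℝ} (hc : 0 < c) (hTT : T * T = (c : ℂ) • T) : T.PosSemidef := by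
  have hTc : T = ((c⁻¹ : ℝ) : ℂ) • (Tᴴ * T) := by
    rw [hT.eq, hTT, smul_smul, ← Complex.ofReal_mul, inv_mul_cancel₀ hc.ne', Complex.ofReal_one,
      one_smul]
  rw [hTc]
  exact (posSemidef_conjTranspose_mul_self T).smul (Complex.zero_le_real.mpr (inv_nonneg.mpr hc.le))

section IntegerModel

/-- `√2` times the Bell vectors `Ψ⁺, Ψ⁻, Φ⁺, Φ⁻`. -/
def bellVecZ : Fin 2 × Fin 2 → Fin 2 × Fin 2 → ℤ
  | (0, 0) => fun p => if p = (0, 0) then 1 else if p = (1, 1) then 1 else 0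
  | (0, 1) => fun p => if p = (0, 0) then 1 else if p = (1, 1) then -1 else 0
  | (1, 0) => fun p => if p = (0, 1) then 1 else if p = (1, 0) then 1 else 0
  | (1, 1) => fun p => if p = (0, 1) then 1 else if p = (1, 0) then -1 else 0

def bellProjZ (h : Fin 2 × Fin 2) : Matrix (Fin 2 × Fin 2) (Fin 2 × Fin 2) ℤ :=
  vecMulVec (bellVecZ h) (bellVecZ h)

def bellDiagZ : Matrix (Fin 2 × Fin 2) (Fin 2 × Fin 2) ℤ :=
  bellProjZ (0, 0) + bellProjZ (0, 1) + bellProjZ (1, 0)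

def ampMidZ (m v : ℕ) {n u : ℕ} (P : Matrix (Fin n × Fin u) (Fin n × Fin u) ℤ) :
    Matrix ((Fin m × Fin n) × Fin u × Fin v) ((Fin m × Fin n) × Fin u × Fin v) ℤ :=
  Matrix.of fun p q =>
    (if p.1.1 = q.1.1 then (1 : ℤ) else 0) * P (p.1.2, p.2.1) (q.1.2, q.2.1) *
      (if p.2.2 = q.2.2 then (1 : ℤ) else 0)

/-- `48 (T − Π(T))`, where `T = √(β_swap ⊗ β)` and `Π` is the Bell-basis pinching of `BC`. -/
def pinchResidualZ :
    Matrix ((Fin 2 × Fin 2) × Fin 2 × Fin 2) ((Fin 2 × Fin 2) × Fin 2 × Fin 2) ℤ :=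
  4 • (bellDiagZ ⊗ₖ bellDiagZ) -
    ∑ h, ampMidZ 2 2 (bellProjZ h) * (bellDiagZ ⊗ₖ bellDiagZ) * ampMidZ 2 2 (bellProjZ h)

lemma bellVecZ_dotProduct : ∀ a b, bellVecZ a ⬝ᵥ bellVecZ b = if a = b then 2 else 0 := by
  decide

lemma bellDiagZ_mul_self : bellDiagZ * bellDiagZ = 2 • bellDiagZ := by decide

lemma bellDiagZ_transpose : bellDiagZᵀ = bellDiagZ := by decide

lemma bellDiagZ_submatrix_swap : bellDiagZ.submatrix Prod.swap Prod.swap = bellDiagZ := by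
  decide

lemma sum_bellDiagZ_fst : ∀ j j', ∑ i, bellDiagZ (i, j) (i, j') = if j = j' then 3 else 0 := by
  decide

lemma sum_bellDiagZ_snd : ∀ k k', ∑ l, bellDiagZ (k, l) (k', l) = if k = k' then 3 else 0 := by
  decide

set_option maxRecDepth 100000 in
lemma trace_pinchResidualZ : trace (pinchResidualZᵀ * pinchResidualZ) = 960 := by decide

end IntegerModel

section Bell

local notation "toℂ" => RingHom.mapMatrix (Int.castRingHom ℂ)

lemma mapMatrix_intCast_kronecker {l n : Type*} [Fintype l] [DecidableEq l] [Fintype n]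
    [DecidableEq n] (A : Matrix l l ℤ) (B : Matrix n n ℤ) :
    toℂ (A ⊗ₖ B) = toℂ A ⊗ₖ toℂ B := by
  ext ⟨a, b⟩ ⟨c, d⟩
  simp

lemma conjTranspose_mapMatrix_intCast {n : Type*} [Fintype n] [DecidableEq n]
    (A : Matrix n n ℤ) : (toℂ A)ᴴ = toℂ Aᵀ := by
  ext i j
  simp

lemma hsNormSq_smul_mapMatrix_intCast {n : Type*} [Fintype n] [DecidableEq n] (c : ℝ)
    (A : Matrix n n ℤ) :
    hsNormSq ((c : ℂ) • toℂ A) = c ^ 2 * (trace (Aᵀ * A) : ℤ) := by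
  rw [hsNormSq, conjTranspose_smul, conjTranspose_mapMatrix_intCast, smul_mul_smul_comm,
    ← map_mul, trace_smul, RingHom.mapMatrix_apply, ← AddMonoidHom.map_trace]
  simp [sq]

lemma ampMid_mapMatrix_intCast {m v n u : ℕ} (P : Matrix (Fin n × Fin u) (Fin n × Fin u) ℤ) :
    ampMid m v (toℂ P) = toℂ (ampMidZ m v P) := by
  ext p q
  simp [ampMid, ampMidZ, apply_ite (Int.cast : ℤ → ℂ)]

lemma ofReal_one_div_sqrt_two_mul_self :
    (((1 : ℝ) / Real.sqrt 2 : ℝ) : ℂ) * (((1 : ℝ) / Real.sqrt 2 : ℝ) : ℂ) = 2⁻¹ := by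
  rw [← Complex.ofReal_mul, div_mul_div_comm, Real.mul_self_sqrt zero_le_two]
  norm_num

noncomputable def bellBasis : Fin 2 × Fin 2 → Fin 2 × Fin 2 → ℂ := fun h p =>
  (((1 : ℝ) / Real.sqrt 2 : ℝ) : ℂ) * bellVecZ h p

lemma bellBasis_isVNM : IsVNM bellBasis := by
  intro a b
  have h := congrArg (fun z : ℤ => (2⁻¹ : ℂ) * z) (bellVecZ_dotProduct a b)
  simp only [dotProduct, Int.cast_sum, Int.cast_mul, Finset.mul_sum] at h
  rw [cInner]
  convert h using 1
  · refine Finset.sum_congr rfl fun p _ => ?_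
    rw [← ofReal_one_div_sqrt_two_mul_self]
    simp only [bellBasis, star_mul', Complex.star_def, Complex.conj_ofReal, map_intCast]
    ring
  · split_ifs <;> norm_num

lemma projOf_bellBasis (h : Fin 2 × Fin 2) :
    projOf bellBasis h = (2⁻¹ : ℂ) • toℂ (bellProjZ h) := by
  ext i j
  rw [← ofReal_one_div_sqrt_two_mul_self]
  simp only [projOf, outer, bellBasis, bellProjZ, vecMulVec_apply, Pi.star_apply, star_mul',
    Complex.star_def, Complex.conj_ofReal, map_intCast, Matrix.smul_apply, RingHom.mapMatrix_apply,
    map_apply, eq_intCast, Int.cast_mul, smul_eq_mul]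
  ring

lemma bellDiag_eq : bellDiag = (6⁻¹ : ℂ) • toℂ bellDiagZ := by
  have hPsiP : PsiP = bellBasis (0, 0) := by
    funext p; fin_cases p <;> simp [PsiP, bellBasis, bellVecZ]
  have hPsiM : PsiM = bellBasis (0, 1) := by
    funext p; fin_cases p <;> simp [PsiM, bellBasis, bellVecZ]
  have hPhiP : PhiP = bellBasis (1, 0) := by
    funext p; fin_cases p <;> simp [PhiP, bellBasis, bellVecZ]
  have hproj := projOf_bellBasis
  simp only [projOf] at hproj
  rw [bellDiag, hPsiP, hPsiM, hPhiP, hproj, hproj, hproj, ← smul_add, ← smul_add, ← map_add,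
    ← map_add, smul_smul, ← bellDiagZ]
  norm_num

lemma bellSwap_eq_bellDiag : bellSwap = bellDiag := by
  ext p q
  change bellDiag (p.2, p.1) (q.2, q.1) = bellDiag p q
  rw [bellDiag_eq]
  nth_rewrite 2 [← bellDiagZ_submatrix_swap]
  rfl

lemma redB_bellDiag : redB bellDiag = (2⁻¹ : ℂ) • 1 := by
  ext j j'
  have h := congrArg (fun z : ℤ => (6⁻¹ : ℂ) * z) (sum_bellDiagZ_fst j j')
  simp only [Int.cast_sum, Finset.mul_sum] at h
  simp only [redB, bellDiag_eq, of_apply, Matrix.smul_apply, RingHom.mapMatrix_apply, map_apply,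
    eq_intCast, smul_eq_mul, h, one_apply]
  split_ifs <;> norm_num

lemma redC_bellDiag : redC bellDiag = (2⁻¹ : ℂ) • 1 := by
  ext k k'
  have h := congrArg (fun z : ℤ => (6⁻¹ : ℂ) * z) (sum_bellDiagZ_snd k k')
  simp only [Int.cast_sum, Finset.mul_sum] at h
  simp only [redC, bellDiag_eq, of_apply, Matrix.smul_apply, RingHom.mapMatrix_apply, map_apply,
    eq_intCast, smul_eq_mul, h, one_apply]
  split_ifs <;> norm_num

lemma bellBasis_fixes : FixesVNM bellBasis (redB bellDiag ⊗ₖ redC bellDiag) := by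
  rw [redB_bellDiag, redC_bellDiag, smul_kronecker, kronecker_smul, one_kronecker_one, smul_smul]
  exact fixesVNM_smul_one bellBasis_isVNM _

lemma bellDiag_mul_self : bellDiag * bellDiag = (3⁻¹ : ℂ) • bellDiag := by
  rw [bellDiag_eq, smul_mul_smul_comm, ← map_mul, bellDiagZ_mul_self, map_nsmul,
    ← Nat.cast_smul_eq_nsmul ℂ, smul_smul, smul_smul]
  norm_num

lemma bellDiag_isHermitian : bellDiag.IsHermitian := by
  rw [IsHermitian, bellDiag_eq, conjTranspose_smul, conjTranspose_mapMatrix_intCast,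
    bellDiagZ_transpose]
  norm_num

lemma psdSqrt_bellDiag_kronecker :
    psdSqrt (bellDiag ⊗ₖ bellDiag) = (3 : ℂ) • (bellDiag ⊗ₖ bellDiag) := by
  have hsq : ((3 : ℂ) • (bellDiag ⊗ₖ bellDiag)) * ((3 : ℂ) • (bellDiag ⊗ₖ bellDiag)) =
      bellDiag ⊗ₖ bellDiag := by
    rw [smul_mul_smul_comm, ← mul_kronecker_mul, bellDiag_mul_self, smul_kronecker,
      kronecker_smul, smul_smul, smul_smul]
    norm_num
  refine psdSqrt_eq_of_mul_self (posSemidef_of_mul_self_eq_smul ?_ (c := 3⁻¹) (by norm_num) ?_) hsq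
  · rw [IsHermitian, conjTranspose_smul, conjTranspose_kronecker, bellDiag_isHermitian.eq]
    norm_num
  · rw [hsq, smul_smul]
    norm_num

lemma smul_bellDiag_kronecker_eq :
    (3 : ℂ) • (bellDiag ⊗ₖ bellDiag) = (12⁻¹ : ℂ) • toℂ (bellDiagZ ⊗ₖ bellDiagZ) := by
  rw [bellDiag_eq, smul_kronecker, kronecker_smul, ← mapMatrix_intCast_kronecker, smul_smul,
    smul_smul]
  norm_num

lemma hsNormSq_sub_pinchBC_bellBasis :
    hsNormSq ((3 : ℂ) • (bellDiag ⊗ₖ bellDiag) -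
      pinchBC bellBasis ((3 : ℂ) • (bellDiag ⊗ₖ bellDiag))) = 5 / 12 := by
  have hterm : ∀ h, ampMid 2 2 (projOf bellBasis h) * ((12⁻¹ : ℂ) • toℂ (bellDiagZ ⊗ₖ bellDiagZ)) *
      ampMid 2 2 (projOf bellBasis h) =
      (48⁻¹ : ℂ) • toℂ (ampMidZ 2 2 (bellProjZ h) * (bellDiagZ ⊗ₖ bellDiagZ) *
        ampMidZ 2 2 (bellProjZ h)) := fun h => by
    rw [projOf_bellBasis, ampMid_smul, ampMid_mapMatrix_intCast, map_mul, map_mul,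
      smul_mul_smul_comm, smul_mul_smul_comm]
    norm_num
  have hres : (12⁻¹ : ℂ) • toℂ (bellDiagZ ⊗ₖ bellDiagZ) -
      pinchBC bellBasis ((12⁻¹ : ℂ) • toℂ (bellDiagZ ⊗ₖ bellDiagZ)) =
      ((48⁻¹ : ℝ) : ℂ) • toℂ pinchResidualZ := by
    rw [pinchBC, Finset.sum_congr rfl fun h _ => hterm h, ← Finset.smul_sum, ← map_sum,
      pinchResidualZ, map_sub, map_nsmul, smul_sub, ← Nat.cast_smul_eq_nsmul ℂ, smul_smul]
    norm_num
  rw [smul_bellDiag_kronecker_eq, hres, hsNormSq_smul_mapMatrix_intCast, trace_pinchResidualZ]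
  norm_num

end Bell

/-- `N_H^b(β_swap ⊗ β) ≥ 5/12`. -/
theorem stmt19 : NHb bellSwap bellDiag ≥ 5 / 12 := by
  rw [bellSwap_eq_bellDiag]
  have h := le_NHb bellBasis_isVNM bellBasis_fixes
  rwa [psdSqrt_bellDiag_kronecker, hsNormSq_sub_pinchBC_bellBasis] at h
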